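/- arXiv:2409.01987 — 4 statements merged into one kernel-verified Lean document; each statement's English description precedes it below -/
import Mathlib

section
/- For Hermitian operators A0, A1, B0, B1 on a finite-dimensional complex Hilbert space with A0²=A1²=B0²=B1²=I, and A's commuting with B's, the operator identity ((A0+A1)/√2 − B0)² + ((A0−A1)/√2 − B1)² = 4·I − √2·(A0B0 + A0B1 + A1B0 − A1B1) holds. -/
/-!
Expanding the two squares, the terms `A₀A₁ + A₁A₀` cancel by the parallelogram identity
`(a + b)² + (a - b)² = 2(a² + b²)`, so with `c = 1/√2` the pure `A`-part is `4c² = 2` and the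
pure `B`-part is `B₀² + B₁² = 2`. Since each `Aᵢ` commutes with each `Bⱼ`, the mixed terms are
`-2c(A₀B₀ + A₁B₀ + A₀B₁ - A₁B₁)`, and `2c = √2`.
-/

section CHSH

variable {k R : Type*} [CommRing k] [Ring R] [Algebra k R]

def chshOperator (a₀ a₁ b₀ b₁ : R) : R := a₀ * b₀ + a₀ * b₁ + a₁ * b₀ - a₁ * b₁

theorem add_sq_add_sub_sq (a b : R) : (a + b) ^ 2 + (a - b) ^ 2 = 2 * (a ^ 2 + b ^ 2) := by
  noncomm_ring

theorem Commute.sub_sq_add_sub_sq {x₀ x₁ y₀ y₁ : R} (h₀ : Commute x₀ y₀) (h₁ : Commute x₁ y₁) :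
    (x₀ - y₀) ^ 2 + (x₁ - y₁) ^ 2
      = (x₀ ^ 2 + x₁ ^ 2) + (y₀ ^ 2 + y₁ ^ 2) - 2 * (x₀ * y₀ + x₁ * y₁) := by
  rw [h₀.sub_sq, h₁.sub_sq, mul_add, mul_assoc, mul_assoc]
  abel

theorem sub_sq_add_sub_sq_eq_four_sub_smul_chshOperator (c : k) (hc : 2 * c ^ 2 = 1)
    {a₀ a₁ b₀ b₁ : R} (ha₀ : a₀ ^ 2 = 1) (ha₁ : a₁ ^ 2 = 1) (hb₀ : b₀ ^ 2 = 1) (hb₁ : b₁ ^ 2 = 1)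
    (h₀₀ : Commute a₀ b₀) (h₀₁ : Commute a₀ b₁) (h₁₀ : Commute a₁ b₀) (h₁₁ : Commute a₁ b₁) :
    (c • (a₀ + a₁) - b₀) ^ 2 + (c • (a₀ - a₁) - b₁) ^ 2
      = 4 - (2 * c) • chshOperator a₀ a₁ b₀ b₁ := by
  have hA : (c • (a₀ + a₁)) ^ 2 + (c • (a₀ - a₁)) ^ 2 = 2 := by
    rw [smul_pow, smul_pow, ← smul_add, add_sq_add_sub_sq, ha₀, ha₁, one_add_one_eq_two,
      Algebra.smul_def, ← map_ofNat (algebraMap k R) 2, ← map_mul, ← map_mul,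
      show c ^ 2 * (2 * 2) = 2 by linear_combination 2 * hc, map_ofNat]
  have hAB : c • (a₀ + a₁) * b₀ + c • (a₀ - a₁) * b₁ = c • chshOperator a₀ a₁ b₀ b₁ := by
    simp only [chshOperator, smul_mul_assoc, add_mul, sub_mul, smul_add, smul_sub]
    abel
  rw [((h₀₀.add_left h₁₀).smul_left c).sub_sq_add_sub_sq ((h₀₁.sub_left h₁₁).smul_left c),
    hA, hb₀, hb₁, hAB, mul_smul, two_smul, two_mul]
  norm_num

end CHSH

theorem stmt_0_general {H : Type*} [NormedAddCommGroup H] [InnerProductSpace ℂ H]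
    (A0 A1 B0 B1 : H →ₗ[ℂ] H)
    (hA0sq : A0 ^ 2 = 1) (hA1sq : A1 ^ 2 = 1) (hB0sq : B0 ^ 2 = 1) (hB1sq : B1 ^ 2 = 1)
    (h00 : Commute A0 B0) (h01 : Commute A0 B1) (h10 : Commute A1 B0) (h11 : Commute A1 B1) :
    ((Real.sqrt 2 : ℂ)⁻¹ • (A0 + A1) - B0) ^ 2 + ((Real.sqrt 2 : ℂ)⁻¹ • (A0 - A1) - B1) ^ 2
      = (4 : ℂ) • (1 : H →ₗ[ℂ] H)
        - (Real.sqrt 2 : ℂ) • (A0 * B0 + A0 * B1 + A1 * B0 - A1 * B1) := by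
  have hsqrt : 2 * (Real.sqrt 2 : ℂ)⁻¹ = Real.sqrt 2 := by
    rw [← div_eq_mul_inv]
    exact_mod_cast Real.div_sqrt
  have hc : 2 * ((Real.sqrt 2 : ℂ)⁻¹) ^ 2 = 1 := by
    rw [sq, ← mul_assoc, hsqrt, mul_inv_cancel₀ (by simp)]
  rw [sub_sq_add_sub_sq_eq_four_sub_smul_chshOperator _ hc hA0sq hA1sq hB0sq hB1sq
      h00 h01 h10 h11, hsqrt, ofNat_smul_eq_nsmul, nsmul_one, Nat.cast_ofNat, chshOperator]

/-- Sum-of-squares decomposition of the CHSH operator. -/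
theorem stmt_0 {H : Type*} [NormedAddCommGroup H] [InnerProductSpace ℂ H]
    [FiniteDimensional ℂ H]
    (A0 A1 B0 B1 : H →ₗ[ℂ] H)
    (hA0 : A0.IsSymmetric) (hA1 : A1.IsSymmetric)
    (hB0 : B0.IsSymmetric) (hB1 : B1.IsSymmetric)
    (hA0sq : A0 ^ 2 = 1) (hA1sq : A1 ^ 2 = 1) (hB0sq : B0 ^ 2 = 1) (hB1sq : B1 ^ 2 = 1)
    (h00 : Commute A0 B0) (h01 : Commute A0 B1) (h10 : Commute A1 B0) (h11 : Commute A1 B1) :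
    ((Real.sqrt 2 : ℂ)⁻¹ • (A0 + A1) - B0) ^ 2 + ((Real.sqrt 2 : ℂ)⁻¹ • (A0 - A1) - B1) ^ 2
      = (4 : ℂ) • (1 : H →ₗ[ℂ] H)
        - (Real.sqrt 2 : ℂ) • (A0 * B0 + A0 * B1 + A1 * B0 - A1 * B1) :=
  stmt_0_general A0 A1 B0 B1 hA0sq hA1sq hB0sq hB1sq h00 h01 h10 h11
end

section
/- Suppose operators Xk, Zk for k = 1,…,9 act on a Hilbert space with distinct-site operators commuting, Xk² = Zk² = I for k ∈ {2,3,5,6,8,9}, and {Xk, Zk} = 0 for k ∈ {1,4,7}. If a vector ψ satisfies S̃iψ = ψ for all nine operators S̃1=Z1Z2, S̃2=Z1Z3, S̃3=Z4Z5, S̃4=Z4Z6, S̃5=Z7Z8, S̃6=Z7Z9, S̃7=X1X2X3X4X5X6, S̃8=X1X2X3X7X8X9, S̃9=X4X5X6X7X8X9, and each Xk, Zk is Hermitian, then Xk²ψ = Zk²ψ = ψ and {Xk, Zk}ψ = 0 for all k = 1,…,9. -/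
/-!
Sites are numbered from `0`, so the blocks are `{0,1,2}`, `{3,4,5}`, `{6,7,8}`, and in each the
first site `b` is the one where only anticommutation is known.

In a block `{b, g, h}`, `Z b Z g ψ = ψ` and `Z g ^ 2 = 1` give `Z b ^ 2 ψ = ψ` and
`Z g ψ = Z b ψ`. The block products `Pᵢ = X b X g X h` pairwise commute and `Pᵢ Pⱼ ψ = ψ` for
all three pairs (this is where `S̃9` is needed), so `Pᵢ ^ 2 ψ = (Pᵢ Pⱼ) (Pᵢ Pₗ) ψ = ψ`, while
`Pᵢ ^ 2 = X b ^ 2`. At an ordinary site `g`, `X g ψ = X b R ψ` with `R` a product of `X`'s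
commuting with `Z g` and `Z b`; hence `Z g X g ψ = X b R Z b ψ = -Z b X g ψ = -X g Z g ψ`,
which transports the anticommutation from `b` to `g`.
-/

namespace Module.End

variable {R M : Type*} [Semiring R]

section AddCommMonoid

variable [AddCommMonoid M] [Module R M] {a b c : Module.End R M} {ψ : M}

theorem apply_eq_of_sq_eq_one_of_mul_apply_eq_self (ha : a ^ 2 = 1) (h : (a * b) ψ = ψ) :
    a ψ = b ψ :=
  calc a ψ = (a ^ 2 * b) ψ := by rw [sq, mul_assoc, mul_apply a, h]
    _ = b ψ := by rw [ha, one_mul]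

theorem sq_apply_eq_self_of_mul_apply_eq_self (hab : Commute a b) (h₁ : (a * b) ψ = ψ)
    (h₂ : (a * c) ψ = ψ) (h₃ : (b * c) ψ = ψ) : (a ^ 2) ψ = ψ := by
  have key : a ^ 2 * (b * c) = a * b * (a * c) := by
    rw [sq, mul_assoc a b, ← mul_assoc b, ← hab.eq]
    simp only [mul_assoc]
  calc (a ^ 2) ψ = (a ^ 2 * (b * c)) ψ := by rw [mul_apply (a ^ 2), h₃]
    _ = ψ := by rw [key, mul_apply, h₂, h₁]

theorem sq_apply_eq_self_of_commute_of_mul_apply_eq_self (hab : Commute a b) (hac : Commute a c)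
    (hbc : Commute b c) (h₁ : (a * b) ψ = ψ) (h₂ : (a * c) ψ = ψ) (h₃ : (b * c) ψ = ψ) :
    (a ^ 2) ψ = ψ ∧ (b ^ 2) ψ = ψ ∧ (c ^ 2) ψ = ψ :=
  ⟨sq_apply_eq_self_of_mul_apply_eq_self hab h₁ h₂ h₃,
    sq_apply_eq_self_of_mul_apply_eq_self hbc h₃ (hab.eq ▸ h₁) (hac.eq ▸ h₂),
    sq_apply_eq_self_of_mul_apply_eq_self hac.symm (hac.eq ▸ h₂) (hbc.eq ▸ h₃) h₁⟩

end AddCommMonoid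

theorem anticommutator_apply_eq_zero [AddCommGroup M] [Module R M]
    {x z x' z' r : Module.End R M} {ψ : M} (hz : z ψ = z' ψ) (hx : x ψ = (x' * r) ψ)
    (hxz' : Commute x z') (hzx' : Commute z x') (hzr : Commute z r) (hz'r : Commute z' r)
    (hac : x' * z' + z' * x' = 0) : (x * z + z * x) ψ = 0 := by
  have hxz : (x * z) ψ = (z' * x) ψ := by rw [mul_apply, hz, ← mul_apply, hxz'.eq]
  have hzx : (z * x) ψ = -(z' * x) ψ :=
    calc (z * x) ψ = (x' * r * z) ψ := by
          rw [mul_apply, hx, ← mul_apply, (hzx'.mul_right hzr).eq]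
      _ = (x' * z' * r) ψ := by
          rw [mul_apply, hz, ← mul_apply, mul_assoc, ← hz'r.eq, mul_assoc]
      _ = -(z' * x) ψ := by
          rw [eq_neg_of_add_eq_zero_left hac, neg_mul, LinearMap.neg_apply, mul_assoc,
            mul_apply z', ← hx, mul_apply]
  rw [LinearMap.add_apply, hxz, hzx, add_neg_cancel]

end Module.End

open Module.End

section

variable {R M ι : Type*} [Semiring R] [AddCommGroup M] [Module R M]

def IsPauliPairOn (x z : Module.End R M) (ψ : M) : Prop :=
  (x ^ 2) ψ = ψ ∧ (z ^ 2) ψ = ψ ∧ (x * z + z * x) ψ = 0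

def SitewiseCommute (X Z : ι → Module.End R M) : Prop :=
  ∀ i j, i ≠ j → Commute (X i) (X j) ∧ Commute (Z i) (Z j) ∧ Commute (X i) (Z j)

namespace SitewiseCommute

variable {X Z : ι → Module.End R M} {ψ : M} {i j b g h : ι}

theorem commute_x (hc : SitewiseCommute X Z) (hij : i ≠ j) : Commute (X i) (X j) :=
  (hc i j hij).1

theorem commute_z (hc : SitewiseCommute X Z) (hij : i ≠ j) : Commute (Z i) (Z j) :=
  (hc i j hij).2.1

theorem commute_x_z (hc : SitewiseCommute X Z) (hij : i ≠ j) : Commute (X i) (Z j) :=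
  (hc i j hij).2.2

theorem isPauliPairOn_of_block_sq_apply_eq_self (hc : SitewiseCommute X Z) (hbg : b ≠ g)
    (hbh : b ≠ h) (hgh : g ≠ h) (hsqg : X g ^ 2 = 1 ∧ Z g ^ 2 = 1) (hsqh : X h ^ 2 = 1)
    (hac : X b * Z b + Z b * X b = 0) (hZ : (Z b * Z g) ψ = ψ)
    (hP : ((X b * X g * X h) ^ 2) ψ = ψ) : IsPauliPairOn (X b) (Z b) ψ := by
  have hsq : (X b * X g * X h) ^ 2 = X b ^ 2 := by
    rw [((hc.commute_x hbh).mul_left (hc.commute_x hgh)).mul_pow, (hc.commute_x hbg).mul_pow,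
      hsqg.1, hsqh, mul_one, mul_one]
  have hZgg : (Z g * Z g) ψ = ψ := by rw [← sq, hsqg.2, one_apply]
  refine ⟨hsq ▸ hP, sq_apply_eq_self_of_mul_apply_eq_self (hc.commute_z hbg) hZ hZ hZgg, ?_⟩
  rw [hac, LinearMap.zero_apply]

theorem isPauliPairOn_of_mul_apply_eq_self (hc : SitewiseCommute X Z) (hbg : b ≠ g)
    {r : Module.End R M} (hrb : Commute r (Z b)) (hrg : Commute r (Z g))
    (hsq : X g ^ 2 = 1 ∧ Z g ^ 2 = 1) (hac : X b * Z b + Z b * X b = 0)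
    (hZ : (Z b * Z g) ψ = ψ) (hX : (X g * (X b * r)) ψ = ψ) : IsPauliPairOn (X g) (Z g) ψ := by
  refine ⟨by rw [hsq.1, one_apply], by rw [hsq.2, one_apply], ?_⟩
  exact anticommutator_apply_eq_zero
    (apply_eq_of_sq_eq_one_of_mul_apply_eq_self hsq.2 ((hc.commute_z hbg).eq ▸ hZ))
    (apply_eq_of_sq_eq_one_of_mul_apply_eq_self hsq.1 hX) (hc.commute_x_z hbg.symm)
    (hc.commute_x_z hbg).symm hrg.symm hrb.symm hac

theorem isPauliPairOn_of_block (hc : SitewiseCommute X Z) (hbg : b ≠ g) (hbh : b ≠ h)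
    (hgh : g ≠ h) (hsqg : X g ^ 2 = 1 ∧ Z g ^ 2 = 1) (hsqh : X h ^ 2 = 1 ∧ Z h ^ 2 = 1)
    (hac : X b * Z b + Z b * X b = 0) {Q : Module.End R M}
    (hQ : ∀ k ∈ ({b, g, h} : Set ι), Commute Q (Z k))
    (hZg : (Z b * Z g) ψ = ψ) (hZh : (Z b * Z h) ψ = ψ) (hX : (X b * X g * X h * Q) ψ = ψ)
    (hP : ((X b * X g * X h) ^ 2) ψ = ψ) :
    IsPauliPairOn (X b) (Z b) ψ ∧ IsPauliPairOn (X g) (Z g) ψ ∧ IsPauliPairOn (X h) (Z h) ψ := by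
  have hQb := hQ b (by simp)
  have hQg := hQ g (by simp)
  have hQh := hQ h (by simp)
  refine ⟨hc.isPauliPairOn_of_block_sq_apply_eq_self hbg hbh hgh hsqg hsqh.1 hac hZg hP,
    hc.isPauliPairOn_of_mul_apply_eq_self hbg ((hc.commute_x_z hbh.symm).mul_left hQb)
      ((hc.commute_x_z hgh.symm).mul_left hQg) hsqg hac hZg ?_,
    hc.isPauliPairOn_of_mul_apply_eq_self hbh ((hc.commute_x_z hbg.symm).mul_left hQb)
      ((hc.commute_x_z hgh).mul_left hQh) hsqh hac hZh ?_⟩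
  · rwa [(hc.commute_x hbg).eq, mul_assoc, mul_assoc] at hX
  · rwa [mul_assoc (X b), (hc.commute_x hgh).eq, ← mul_assoc, (hc.commute_x hbh).eq, mul_assoc,
      mul_assoc] at hX

end SitewiseCommute

end

theorem stmt_8_general {H : Type*} [NormedAddCommGroup H] [InnerProductSpace ℂ H]
    (X Z : Fin 9 → (H →ₗ[ℂ] H))
    (hcomm : ∀ i j, i ≠ j →
      Commute (X i) (X j) ∧ Commute (Z i) (Z j) ∧ Commute (X i) (Z j))
    (hsq : ∀ k, k ∈ ({1, 2, 4, 5, 7, 8} : Set (Fin 9)) → (X k) ^ 2 = 1 ∧ (Z k) ^ 2 = 1)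
    (hac : ∀ k, k ∈ ({0, 3, 6} : Set (Fin 9)) → X k * Z k + Z k * X k = 0)
    (ψ : H)
    (hS1 : (Z 0 * Z 1) ψ = ψ)
    (hS2 : (Z 0 * Z 2) ψ = ψ)
    (hS3 : (Z 3 * Z 4) ψ = ψ)
    (hS4 : (Z 3 * Z 5) ψ = ψ)
    (hS5 : (Z 6 * Z 7) ψ = ψ)
    (hS6 : (Z 6 * Z 8) ψ = ψ)
    (hS7 : (X 0 * X 1 * X 2 * X 3 * X 4 * X 5) ψ = ψ)
    (hS8 : (X 0 * X 1 * X 2 * X 6 * X 7 * X 8) ψ = ψ)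
    (hS9 : (X 3 * X 4 * X 5 * X 6 * X 7 * X 8) ψ = ψ) :
    ∀ k, ((X k) ^ 2) ψ = ψ ∧ ((Z k) ^ 2) ψ = ψ ∧ (X k * Z k + Z k * X k) ψ = 0 := by
  have hc : SitewiseCommute X Z := hcomm
  have h₀₁ : (X 0 * X 1 * X 2 * (X 3 * X 4 * X 5)) ψ = ψ := by simpa only [mul_assoc] using hS7
  have h₀₂ : (X 0 * X 1 * X 2 * (X 6 * X 7 * X 8)) ψ = ψ := by simpa only [mul_assoc] using hS8
  have h₁₂ : (X 3 * X 4 * X 5 * (X 6 * X 7 * X 8)) ψ = ψ := by simpa only [mul_assoc] using hS9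
  have c₀₁ : Commute (X 0 * X 1 * X 2) (X 3 * X 4 * X 5) := by
    apply_rules [Commute.mul_left, Commute.mul_right, hc.commute_x] <;> decide
  have c₀₂ : Commute (X 0 * X 1 * X 2) (X 6 * X 7 * X 8) := by
    apply_rules [Commute.mul_left, Commute.mul_right, hc.commute_x] <;> decide
  have c₁₂ : Commute (X 3 * X 4 * X 5) (X 6 * X 7 * X 8) := by
    apply_rules [Commute.mul_left, Commute.mul_right, hc.commute_x] <;> decide
  obtain ⟨q₀, q₁, q₂⟩ :=
    sq_apply_eq_self_of_commute_of_mul_apply_eq_self c₀₁ c₀₂ c₁₂ h₀₁ h₀₂ h₁₂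
  have hPZ {i j l k : Fin 9} (hi : i ≠ k) (hj : j ≠ k) (hl : l ≠ k) :
      Commute (X i * X j * X l) (Z k) :=
    ((hc.commute_x_z hi).mul_left (hc.commute_x_z hj)).mul_left (hc.commute_x_z hl)
  obtain ⟨p0, p1, p2⟩ := hc.isPauliPairOn_of_block (b := 0) (g := 1) (h := 2)
    (by decide) (by decide) (by decide) (hsq 1 (by simp)) (hsq 2 (by simp)) (hac 0 (by simp))
    (by rintro k (rfl | rfl | rfl) <;> exact hPZ (by decide) (by decide) (by decide))
    hS1 hS2 h₀₁ q₀
  obtain ⟨p3, p4, p5⟩ := hc.isPauliPairOn_of_block (b := 3) (g := 4) (h := 5)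
    (by decide) (by decide) (by decide) (hsq 4 (by simp)) (hsq 5 (by simp)) (hac 3 (by simp))
    (by rintro k (rfl | rfl | rfl) <;> exact hPZ (by decide) (by decide) (by decide))
    hS3 hS4 h₁₂ q₁
  obtain ⟨p6, p7, p8⟩ := hc.isPauliPairOn_of_block (b := 6) (g := 7) (h := 8)
    (by decide) (by decide) (by decide) (hsq 7 (by simp)) (hsq 8 (by simp)) (hac 6 (by simp))
    (by rintro k (rfl | rfl | rfl) <;> exact hPZ (by decide) (by decide) (by decide))
    hS5 hS6 (c₀₂.eq ▸ h₀₂) q₂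
  intro k
  fin_cases k
  exacts [p0, p1, p2, p3, p4, p5, p6, p7, p8]

/-- Algebraic core of self-testing Shor's `[[9,1,3]]` code: the nine (substituted)
stabilizer conditions, with anticommutation at sites 1, 4, 7 and squaring relations at the
remaining sites, imply `Xₖ²ψ = Zₖ²ψ = ψ` and `{Xₖ,Zₖ}ψ = 0` for all `k = 1,…,9`. -/
theorem stmt_8 {H : Type*} [NormedAddCommGroup H] [InnerProductSpace ℂ H]
    [FiniteDimensional ℂ H]
    (X Z : Fin 9 → (H →ₗ[ℂ] H))
    (hherm : ∀ k, (X k).IsSymmetric ∧ (Z k).IsSymmetric)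
    (hcomm : ∀ i j, i ≠ j →
      Commute (X i) (X j) ∧ Commute (Z i) (Z j) ∧ Commute (X i) (Z j))
    (hsq : ∀ k, k ∈ ({1, 2, 4, 5, 7, 8} : Set (Fin 9)) → (X k) ^ 2 = 1 ∧ (Z k) ^ 2 = 1)
    (hac : ∀ k, k ∈ ({0, 3, 6} : Set (Fin 9)) → X k * Z k + Z k * X k = 0)
    (ψ : H)
    (hS1 : (Z 0 * Z 1) ψ = ψ)
    (hS2 : (Z 0 * Z 2) ψ = ψ)
    (hS3 : (Z 3 * Z 4) ψ = ψ)
    (hS4 : (Z 3 * Z 5) ψ = ψ)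
    (hS5 : (Z 6 * Z 7) ψ = ψ)
    (hS6 : (Z 6 * Z 8) ψ = ψ)
    (hS7 : (X 0 * X 1 * X 2 * X 3 * X 4 * X 5) ψ = ψ)
    (hS8 : (X 0 * X 1 * X 2 * X 6 * X 7 * X 8) ψ = ψ)
    (hS9 : (X 3 * X 4 * X 5 * X 6 * X 7 * X 8) ψ = ψ) :
    ∀ k, ((X k) ^ 2) ψ = ψ ∧ ((Z k) ^ 2) ψ = ψ ∧ (X k * Z k + Z k * X k) ψ = 0 :=
  stmt_8_general X Z hcomm hsq hac ψ hS1 hS2 hS3 hS4 hS5 hS6 hS7 hS8 hS9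
end

section
/- (Step of [[9,1,3]] proof) Suppose Hermitian operators satisfy: distinct-site operators commute, Xk²=Zk²=I for k ∈ {2,3,5,6,8,9}, and a vector ψ satisfies X1X2X3X4X5X6 ψ = ψ, X1X2X3X7X8X9 ψ = ψ, X4X5X6X7X8X9 ψ = ψ. Then X1²X4²ψ = X1²X7²ψ = X4²X7²ψ = ψ, and consequently X1⁴ψ = ψ, hence (since X1 is Hermitian) X1²ψ = ψ, and similarly X4²ψ = X7²ψ = ψ. -/
/-!
Squaring a stabilizer condition `S ψ = ψ` kills every factor of `S` that squares to one, so the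
three conditions give `A B ψ = A C ψ = B C ψ = ψ` for the commuting operators `A = X₁²`,
`B = X₄²`, `C = X₇²` (`X 0`, `X 3`, `X 6` below). Then `A² ψ = A² (B C ψ) = (A B) (A C) ψ = ψ`.
Finally, for a Hermitian `T` the vector `w = ψ - T² ψ` satisfies `T² w = -w` once `T⁴ ψ = ψ`;
as `⟪T² w, w⟫ = ‖T w‖² ≥ 0`, this forces `w = 0`.
-/

section Monoid

variable {ι M α : Type*} [Monoid M] [MulAction M α]

theorem mul_pow_six_of_commute {X : ι → M} (hX : ∀ i j, Commute (X i) (X j))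
    (i₁ i₂ i₃ i₄ i₅ i₆ : ι) (n : ℕ) :
    (X i₁ * X i₂ * X i₃ * X i₄ * X i₅ * X i₆) ^ n =
      X i₁ ^ n * X i₂ ^ n * X i₃ ^ n * X i₄ ^ n * X i₅ ^ n * X i₆ ^ n := by
  rw [Commute.mul_pow, Commute.mul_pow, Commute.mul_pow, Commute.mul_pow, Commute.mul_pow] <;>
    repeat' first | apply Commute.mul_left | apply hX

theorem sq_mul_sq_smul_eq_of_smul_eq {X : ι → M} (hX : ∀ i j, Commute (X i) (X j))
    {a p q b r s : ι} (hp : X p ^ 2 = 1) (hq : X q ^ 2 = 1) (hr : X r ^ 2 = 1)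
    (hs : X s ^ 2 = 1) {x : α} (h : (X a * X p * X q * X b * X r * X s) • x = x) :
    (X a ^ 2 * X b ^ 2) • x = x := by
  have hsq : (X a * X p * X q * X b * X r * X s) ^ 2 • x = x := by rw [sq, mul_smul, h, h]
  rwa [mul_pow_six_of_commute hX, hp, hq, hr, hs, mul_one, mul_one, mul_one, mul_one] at hsq

theorem sq_smul_eq_of_mul_smul_eq {a b c : M} (hab : Commute a b) {x : α}
    (hab_x : (a * b) • x = x) (hac_x : (a * c) • x = x) (hbc_x : (b * c) • x = x) :
    (a ^ 2) • x = x :=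
  calc (a ^ 2) • x = (a ^ 2 * (b * c)) • x := by rw [mul_smul, hbc_x]
    _ = ((a * b) * (a * c)) • x := by rw [hab.symm.mul_mul_mul_comm, sq]
    _ = x := by rw [mul_smul, hac_x, hab_x]

theorem sq_smul_eq_of_pairwise_mul_smul_eq {a b c : M} (hab : Commute a b) (hac : Commute a c)
    (hbc : Commute b c) {x : α} (hab_x : (a * b) • x = x) (hac_x : (a * c) • x = x)
    (hbc_x : (b * c) • x = x) :
    (a ^ 2) • x = x ∧ (b ^ 2) • x = x ∧ (c ^ 2) • x = x :=
  ⟨sq_smul_eq_of_mul_smul_eq hab hab_x hac_x hbc_x,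
    sq_smul_eq_of_mul_smul_eq hab.symm (hab.eq ▸ hab_x) hbc_x hac_x,
    sq_smul_eq_of_mul_smul_eq hac.symm (hac.eq ▸ hac_x) (hbc.eq ▸ hbc_x) hab_x⟩

end Monoid

namespace LinearMap.IsSymmetric

variable {𝕜 E : Type*} [RCLike 𝕜] [NormedAddCommGroup E] [InnerProductSpace 𝕜 E]
  {T : E →ₗ[𝕜] E}

theorem eq_zero_of_sq_apply_eq_neg (hT : T.IsSymmetric) {v : E} (h : (T ^ 2) v = -v) :
    v = 0 := by
  have hinner : ((‖T v‖ ^ 2 : ℝ) : 𝕜) = ((-‖v‖ ^ 2 : ℝ) : 𝕜) := by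
    rw [RCLike.ofReal_pow, ← inner_self_eq_norm_sq_to_K, ← hT, ← Module.End.mul_apply, ← sq, h,
      inner_neg_left, inner_self_eq_norm_sq_to_K]
    push_cast
    ring
  have hv : ‖v‖ ^ 2 = 0 := by
    linarith [RCLike.ofReal_injective hinner, sq_nonneg ‖T v‖, sq_nonneg ‖v‖]
  exact norm_eq_zero.mp (pow_eq_zero_iff two_ne_zero |>.mp hv)

theorem sq_apply_eq_of_pow_four_apply_eq (hT : T.IsSymmetric) {ψ : E} (h : (T ^ 4) ψ = ψ) :
    (T ^ 2) ψ = ψ := by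
  have hw : (T ^ 2) (ψ - (T ^ 2) ψ) = -(ψ - (T ^ 2) ψ) := by
    rw [map_sub, ← Module.End.mul_apply, ← pow_add, h, neg_sub]
  exact (sub_eq_zero.mp (hT.eq_zero_of_sq_apply_eq_neg hw)).symm

end LinearMap.IsSymmetric

theorem stmt_9_general {H : Type*} [NormedAddCommGroup H] [InnerProductSpace ℂ H]
    (X : Fin 9 → (H →ₗ[ℂ] H))
    (hherm : ∀ k, (X k).IsSymmetric)
    (hcomm : ∀ i j, i ≠ j → Commute (X i) (X j))
    (hsq : ∀ k, k ∈ ({1, 2, 4, 5, 7, 8} : Set (Fin 9)) → (X k) ^ 2 = 1)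
    (ψ : H)
    (hS7 : (X 0 * X 1 * X 2 * X 3 * X 4 * X 5) ψ = ψ)
    (hS8 : (X 0 * X 1 * X 2 * X 6 * X 7 * X 8) ψ = ψ)
    (hS9 : (X 3 * X 4 * X 5 * X 6 * X 7 * X 8) ψ = ψ) :
    ((X 0) ^ 2 * (X 3) ^ 2) ψ = ψ ∧ ((X 0) ^ 2 * (X 6) ^ 2) ψ = ψ ∧
      ((X 3) ^ 2 * (X 6) ^ 2) ψ = ψ ∧ ((X 0) ^ 4) ψ = ψ ∧
      ((X 0) ^ 2) ψ = ψ ∧ ((X 3) ^ 2) ψ = ψ ∧ ((X 6) ^ 2) ψ = ψ := by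
  have hX : ∀ i j, Commute (X i) (X j) := fun i j => by
    rcases eq_or_ne i j with rfl | hij
    exacts [Commute.refl _, hcomm i j hij]
  simp only [← Module.End.smul_def] at hS7 hS8 hS9 ⊢
  have h03 := sq_mul_sq_smul_eq_of_smul_eq hX (hsq 1 (by simp)) (hsq 2 (by simp))
    (hsq 4 (by simp)) (hsq 5 (by simp)) hS7
  have h06 := sq_mul_sq_smul_eq_of_smul_eq hX (hsq 1 (by simp)) (hsq 2 (by simp))
    (hsq 7 (by simp)) (hsq 8 (by simp)) hS8
  have h36 := sq_mul_sq_smul_eq_of_smul_eq hX (hsq 4 (by simp)) (hsq 5 (by simp))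
    (hsq 7 (by simp)) (hsq 8 (by simp)) hS9
  obtain ⟨h0, h3, h6⟩ := sq_smul_eq_of_pairwise_mul_smul_eq ((hX 0 3).pow_pow 2 2)
    ((hX 0 6).pow_pow 2 2) ((hX 3 6).pow_pow 2 2) h03 h06 h36
  rw [← pow_mul] at h0 h3 h6
  simp only [Module.End.smul_def] at h03 h06 h36 h0 h3 h6 ⊢
  exact ⟨h03, h06, h36, h0, (hherm 0).sq_apply_eq_of_pow_four_apply_eq h0,
    (hherm 3).sq_apply_eq_of_pow_four_apply_eq h3, (hherm 6).sq_apply_eq_of_pow_four_apply_eq h6⟩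

/-- Step of the `[[9,1,3]]` proof: squaring the three `X`-type stabilizer conditions gives
`X₁²X₄²ψ = X₁²X₇²ψ = X₄²X₇²ψ = ψ`, hence `X₁⁴ψ = ψ`, and since `X₁` is Hermitian
`X₁²ψ = ψ`, and similarly `X₄²ψ = X₇²ψ = ψ`. -/
theorem stmt_9 {H : Type*} [NormedAddCommGroup H] [InnerProductSpace ℂ H]
    [FiniteDimensional ℂ H]
    (X : Fin 9 → (H →ₗ[ℂ] H))
    (hherm : ∀ k, (X k).IsSymmetric)
    (hcomm : ∀ i j, i ≠ j → Commute (X i) (X j))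
    (hsq : ∀ k, k ∈ ({1, 2, 4, 5, 7, 8} : Set (Fin 9)) → (X k) ^ 2 = 1)
    (ψ : H)
    (hS7 : (X 0 * X 1 * X 2 * X 3 * X 4 * X 5) ψ = ψ)
    (hS8 : (X 0 * X 1 * X 2 * X 6 * X 7 * X 8) ψ = ψ)
    (hS9 : (X 3 * X 4 * X 5 * X 6 * X 7 * X 8) ψ = ψ) :
    ((X 0) ^ 2 * (X 3) ^ 2) ψ = ψ ∧ ((X 0) ^ 2 * (X 6) ^ 2) ψ = ψ ∧
      ((X 3) ^ 2 * (X 6) ^ 2) ψ = ψ ∧ ((X 0) ^ 4) ψ = ψ ∧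
      ((X 0) ^ 2) ψ = ψ ∧ ((X 3) ^ 2) ψ = ψ ∧ ((X 6) ^ 2) ψ = ψ :=
  stmt_9_general X hherm hcomm hsq ψ hS7 hS8 hS9
end

section
/- Suppose operators Xk, Zk for k = 1,…,7 act on a Hilbert space with distinct-site operators commuting, Xk² = Zk² = I for k ∈ {1,4,6}, and {Xk, Zk} = 0 for k ∈ {2,3,5,7}. If a vector ψ is fixed by the eight operators S̃1=X4X5X6X7, S̃2=X2X3X6X7, S̃3=X1X3X5X7, S̃4=X1X2X5X6, S̃5=Z4Z5Z6Z7, S̃6=Z2Z3Z6Z7, S̃7=Z1Z3Z5Z7, S̃8=Z1Z2Z5Z6, and all Xk, Zk are Hermitian, then Xk²ψ = Zk²ψ = ψ for all k and {Xk, Zk}ψ = 0 for all k = 1,…,7. -/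
/-!
Squaring a stabilizer whose factors commute gives the product of the squares, so ψ is fixed by
products of the commuting positive operators `W k ^ 2` (`W = X` or `Z`). Where `W k ^ 2 = 1` these
products collapse to one square and three pairwise products of squares fixing ψ, and a positive
`A` with `A (A v) = v` fixes `v`.

For the anticommutator at a site `t`, take stabilizers `P = ∏ X`, `Q = ∏ Z` over `t` and an odd
number of anticommuting sites. Then `PQ` and `QP` differ exactly by the sign of the `t`-factor, so
`{X t, Z t} D ψ = 0` with `D = ∏ Z a * X a`. Each factor `Z a * X a` is injective on vectors
fixed by `X a ^ 2` and `Z a ^ 2`, because `(X a * Z a) * (Z a * X a) = Z a ^ 2 * X a ^ 2`.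
At one site no single stabilizer has that shape, but the product of two stabilizers does.
-/

theorem List.prod_map_mul_prod_map_of_commute {ι M : Type*} [Monoid M] (f g : ι → M)
    (hfg : ∀ a b, a ≠ b → Commute (g a) (f b)) :
    ∀ {l : List ι}, l.Nodup →
      (l.map f).prod * (l.map g).prod = (l.map fun a => f a * g a).prod
  | [], _ => by simp
  | a :: l, hl => by
    obtain ⟨ha, hl⟩ := List.nodup_cons.mp hl
    have hga : Commute (g a) (l.map f).prod :=
      Commute.list_prod_right _ _ <| by
        simpa using fun b hb => hfg a b (ne_of_mem_of_not_mem hb ha).symm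
    simp only [List.map_cons, List.prod_cons]
    rw [← prod_map_mul_prod_map_of_commute f g hfg hl, mul_assoc, mul_assoc, hga.symm.left_comm,
      ← mul_assoc]

namespace LinearMap

variable {𝕜 E : Type*} [RCLike 𝕜] [NormedAddCommGroup E] [InnerProductSpace 𝕜 E]

theorem IsSymmetric.isPositive_sq {T : E →ₗ[𝕜] E} (hT : T.IsSymmetric) : (T ^ 2).IsPositive :=
  ⟨hT.pow 2, fun x => by
    rw [sq, Module.End.mul_apply, hT]
    exact inner_self_nonneg⟩

theorem IsPositive.apply_eq_self_of_apply_apply {A : E →ₗ[𝕜] E} (hA : A.IsPositive) {v : E}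
    (h : A (A v) = v) : A v = v := by
  set w := A v - v
  have hw : A w = -w := by simp [w, h]
  have hnonneg := hA.re_inner_nonneg_left w
  rw [hw, inner_neg_left, map_neg, inner_self_eq_norm_sq, neg_nonneg] at hnonneg
  have : ‖w‖ = 0 := by nlinarith [norm_nonneg w]
  exact sub_eq_zero.mp (norm_eq_zero.mp this)

theorem IsPositive.apply_eq_self_of_pairwise {A B C : E →ₗ[𝕜] E} (hA : A.IsPositive)
    (hAB : Commute A B) (hAC : Commute A C) {v : E}
    (hab : A (B v) = v) (hbc : B (C v) = v) (hac : A (C v) = v) :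
    A v = v ∧ B v = v ∧ C v = v := by
  have hAv : A v = B v :=
    calc A v = A (B (C v)) := by rw [hbc]
      _ = B (A (C v)) := LinearMap.congr_fun hAB.eq (C v)
      _ = B v := by rw [hac]
  have hA' : A v = v := hA.apply_eq_self_of_apply_apply (by rw [hAv, hab])
  refine ⟨hA', hAv ▸ hA', ?_⟩
  calc C v = C (A v) := by rw [hA']
    _ = A (C v) := (LinearMap.congr_fun hAC.eq v).symm
    _ = v := hac

end LinearMap

namespace Module.End

variable {R M : Type*} [Semiring R] [AddCommGroup M] [Module R M]

theorem eq_zero_of_anticommute {x z : Module.End R M} (hxz : x * z + z * x = 0) {v : M}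
    (hx : (x ^ 2) v = v) (hz : (z ^ 2) v = v) (h : (z * x) v = 0) : v = 0 := by
  have hxz' : x * z = -(z * x) := eq_neg_of_add_eq_zero_left hxz
  have key : x * z * (z * x) = z ^ 2 * x ^ 2 :=
    calc x * z * (z * x) = -(z * x * (z * x)) := by rw [hxz', neg_mul]
      _ = -(z * (x * z) * x) := by noncomm_ring
      _ = z ^ 2 * x ^ 2 := by rw [hxz']; noncomm_ring
  calc v = (z ^ 2 * x ^ 2) v := by rw [mul_apply, hx, hz]
    _ = (x * z) ((z * x) v) := by rw [← key]; rfl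
    _ = 0 := by rw [h, map_zero]

theorem apply_apply_eq_of_commute {f g : Module.End R M} (h : Commute f g) {v : M}
    (hv : f v = v) : f (g v) = g v := by
  rw [← mul_apply, h.eq, mul_apply, hv]

theorem prod_map_sq_apply_eq_self {ι : Type*} (W : ι → Module.End R M)
    (hW : ∀ a b, a ≠ b → Commute (W a) (W b)) {l : List ι} (hl : l.Nodup) {v : M}
    (h : (l.map W).prod v = v) : (l.map (W · ^ 2)).prod v = v := by
  simp only [sq, ← List.prod_map_mul_prod_map_of_commute W W hW hl, mul_apply, h]

end Module.End

section Sites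

variable {ι R M : Type*} [Semiring R] [AddCommGroup M] [Module R M] (X Z : ι → Module.End R M)

theorem eq_zero_of_prod_map_apply_eq_zero
    (hcomm : ∀ i j, i ≠ j → Commute (X i) (X j) ∧ Commute (Z i) (Z j) ∧ Commute (X i) (Z j)) :
    ∀ {l : List ι}, l.Nodup → (∀ a ∈ l, X a * Z a + Z a * X a = 0) →
      ∀ {v : M}, (∀ a ∈ l, (X a ^ 2) v = v ∧ (Z a ^ 2) v = v) →
      (l.map fun a => Z a * X a).prod v = 0 → v = 0
  | [], _, _, v, _, h => by simpa using h
  | a :: l, hl, hanti, v, hv, h => by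
    obtain ⟨ha, hl⟩ := List.nodup_cons.mp hl
    set D := (l.map fun b => Z b * X b).prod
    have hsite : ∀ b ∈ l, Commute (X a) (Z b * X b) ∧ Commute (Z a) (Z b * X b) := by
      intro b hb
      have hba := ne_of_mem_of_not_mem hb ha
      obtain ⟨hXX, hZZ, hXZ⟩ := hcomm a b hba.symm
      exact ⟨hXZ.mul_right hXX, hZZ.mul_right (hcomm b a hba).2.2.symm⟩
    have hD : Commute (X a) D ∧ Commute (Z a) D :=
      ⟨Commute.list_prod_right _ _ (List.forall_mem_map.mpr fun b hb => (hsite b hb).1),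
        Commute.list_prod_right _ _ (List.forall_mem_map.mpr fun b hb => (hsite b hb).2)⟩
    have hDv : D v = 0 := by
      refine Module.End.eq_zero_of_anticommute (hanti a List.mem_cons_self) ?_ ?_ h
      · exact Module.End.apply_apply_eq_of_commute (hD.1.pow_left 2) (hv a List.mem_cons_self).1
      · exact Module.End.apply_apply_eq_of_commute (hD.2.pow_left 2) (hv a List.mem_cons_self).2
    exact eq_zero_of_prod_map_apply_eq_zero hcomm hl
      (fun b hb => hanti b (List.mem_cons_of_mem a hb))
      (fun b hb => hv b (List.mem_cons_of_mem a hb)) hDv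

theorem anticommutator_apply_eq_zero
    (hcomm : ∀ i j, i ≠ j → Commute (X i) (X j) ∧ Commute (Z i) (Z j) ∧ Commute (X i) (Z j))
    {t : ι} {l : List ι} (hl : (t :: l).Nodup) (hodd : Odd l.length)
    (hanti : ∀ a ∈ l, X a * Z a + Z a * X a = 0) {ψ : M}
    (hsq : ∀ a ∈ l, (X a ^ 2) ψ = ψ ∧ (Z a ^ 2) ψ = ψ)
    (hX : ((t :: l).map X).prod ψ = ψ) (hZ : ((t :: l).map Z).prod ψ = ψ) :
    (X t * Z t + Z t * X t) ψ = 0 := by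
  obtain ⟨ht, hl'⟩ := List.nodup_cons.mp hl
  have hZX : ∀ a b, a ≠ b → Commute (Z a) (X b) := fun a b h => (hcomm b a h.symm).2.2.symm
  have hXZ : ∀ a b, a ≠ b → Commute (X a) (Z b) := fun a b h => (hcomm a b h).2.2
  set D := (l.map fun a => Z a * X a).prod
  have hflip : (l.map fun a => X a * Z a).prod = -D := by
    have : (l.map fun a => X a * Z a) = (l.map fun a => Z a * X a).map Neg.neg := by
      rw [List.map_map]
      exact List.map_congr_left fun a ha => eq_neg_of_add_eq_zero_left (hanti a ha)
    rw [this, List.prod_map_neg, List.length_map, hodd.neg_one_pow, neg_one_mul]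
  have hPQ : ((t :: l).map X).prod * ((t :: l).map Z).prod = -(X t * Z t * D) := by
    rw [List.prod_map_mul_prod_map_of_commute X Z hZX hl, List.map_cons, List.prod_cons, hflip,
      mul_neg]
  have hQP : ((t :: l).map Z).prod * ((t :: l).map X).prod = Z t * X t * D :=
    List.prod_map_mul_prod_map_of_commute Z X hXZ hl
  have hAD : ((X t * Z t + Z t * X t) * D) ψ = 0 :=
    calc ((X t * Z t + Z t * X t) * D) ψ = (Z t * X t * D) ψ - (-(X t * Z t * D)) ψ := by
          rw [add_mul, LinearMap.add_apply, LinearMap.neg_apply, sub_neg_eq_add, add_comm]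
      _ = ψ - ψ := by
          rw [← hPQ, ← hQP, Module.End.mul_apply, Module.End.mul_apply, hX, hZ, hX]
      _ = 0 := sub_self ψ
  have hsite : ∀ a ∈ l,
      Commute (X a) (X t * Z t + Z t * X t) ∧ Commute (Z a) (X t * Z t + Z t * X t) := by
    intro a ha
    have hat := ne_of_mem_of_not_mem ha ht
    obtain ⟨hXX, hZZ, -⟩ := hcomm a t hat
    exact ⟨(hXX.mul_right (hXZ a t hat)).add_right ((hXZ a t hat).mul_right hXX),
      ((hZX a t hat).mul_right hZZ).add_right (hZZ.mul_right (hZX a t hat))⟩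
  have hDA : Commute D (X t * Z t + Z t * X t) :=
    Commute.list_prod_left _ _
      (List.forall_mem_map.mpr fun a ha => (hsite a ha).2.mul_left (hsite a ha).1)
  refine eq_zero_of_prod_map_apply_eq_zero X Z hcomm hl' hanti (fun a ha => ⟨?_, ?_⟩)
    (by rw [← Module.End.mul_apply, hDA.eq, hAD])
  · exact Module.End.apply_apply_eq_of_commute ((hsite a ha).1.pow_left 2) (hsq a ha).1
  · exact Module.End.apply_apply_eq_of_commute ((hsite a ha).2.pow_left 2) (hsq a ha).2

end Sites

theorem steane_derived_stabilizers {R M : Type*} [Semiring R] [AddCommGroup M] [Module R M]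
    (W : Fin 7 → Module.End R M) (hW : ∀ a b, a ≠ b → Commute (W a) (W b))
    (h5 : W 5 ^ 2 = 1) {ψ : M} (h6 : (W 6 ^ 2) ψ = ψ)
    (hS1 : (W 3 * W 4 * W 5 * W 6) ψ = ψ) (hS2 : (W 1 * W 2 * W 5 * W 6) ψ = ψ) :
    ([3, 1, 2, 4].map W).prod ψ = ψ ∧ ([5, 1, 2, 6].map W).prod ψ = ψ := by
  have hperm {l₁ l₂ : List (Fin 7)} (h : l₁.Perm l₂) : (l₁.map W).prod = (l₂.map W).prod :=
    (h.map W).prod_eq' <| List.pairwise_map.mpr <| List.pairwise_of_forall fun a b =>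
      if hab : a = b then hab ▸ Commute.refl _ else hW a b hab
  have hS1' : ([3, 4, 5, 6].map W).prod ψ = ψ := by simpa [mul_assoc] using hS1
  have hS2' : ([1, 2, 5, 6].map W).prod ψ = ψ := by simpa [mul_assoc] using hS2
  have h5566 : ([5, 5, 6, 6].map W).prod ψ = ψ := by
    simpa [← mul_assoc, ← sq, h5] using h6
  constructor
  · calc ([3, 1, 2, 4].map W).prod ψ
        = (([3, 1, 2, 4] ++ [5, 5, 6, 6] : List (Fin 7)).map W).prod ψ := by
          rw [List.map_append, List.prod_append, Module.End.mul_apply, h5566]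
      _ = (([3, 4, 5, 6] ++ [1, 2, 5, 6] : List (Fin 7)).map W).prod ψ :=
          LinearMap.congr_fun (hperm (by decide)) ψ
      _ = ψ := by rw [List.map_append, List.prod_append, Module.End.mul_apply, hS2', hS1']
  · rwa [hperm (l₂ := [1, 2, 5, 6]) (by decide)]

theorem steane_sq_apply_eq_self {𝕜 E : Type*} [RCLike 𝕜] [NormedAddCommGroup E]
    [InnerProductSpace 𝕜 E] (W : Fin 7 → E →ₗ[𝕜] E) (hsym : ∀ k, (W k).IsSymmetric)
    (hW : ∀ a b, a ≠ b → Commute (W a) (W b))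
    (h0 : W 0 ^ 2 = 1) (h3 : W 3 ^ 2 = 1) (h5 : W 5 ^ 2 = 1) {ψ : E}
    (hS1 : (W 3 * W 4 * W 5 * W 6) ψ = ψ) (hS2 : (W 1 * W 2 * W 5 * W 6) ψ = ψ)
    (hS3 : (W 0 * W 2 * W 4 * W 6) ψ = ψ) (hS4 : (W 0 * W 1 * W 4 * W 5) ψ = ψ) :
    ∀ k, (W k ^ 2) ψ = ψ := by
  have sq_fix (l : List (Fin 7)) (hl : l.Nodup) :=
    Module.End.prod_map_sq_apply_eq_self W hW hl (v := ψ)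
  have h46 := sq_fix [3, 4, 5, 6] (by decide) (by simpa [mul_assoc] using hS1)
  have h126 := sq_fix [1, 2, 5, 6] (by decide) (by simpa [mul_assoc] using hS2)
  have h246 := sq_fix [0, 2, 4, 6] (by decide) (by simpa [mul_assoc] using hS3)
  have h14 := sq_fix [0, 1, 4, 5] (by decide) (by simpa [mul_assoc] using hS4)
  simp only [List.map_cons, List.map_nil, List.prod_cons, List.prod_nil, mul_one, one_mul,
    Module.End.mul_apply, h0, h3, h5] at h46 h126 h246 h14
  have h2 : (W 2 ^ 2) ψ = ψ := by rwa [h46] at h246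
  have h16 : (W 1 ^ 2) ((W 6 ^ 2) ψ) = ψ := by
    rwa [Module.End.apply_apply_eq_of_commute ((hW 2 6 (by decide)).pow_pow 2 2) h2] at h126
  obtain ⟨h1, h4, h6⟩ := (hsym 1).isPositive_sq.apply_eq_self_of_pairwise
    ((hW 1 4 (by decide)).pow_pow 2 2) ((hW 1 6 (by decide)).pow_pow 2 2) h14 h46 h16
  intro k
  fin_cases k <;> simp [h0, h1, h2, h3, h4, h5, h6]

theorem stmt_10_general {H : Type*} [NormedAddCommGroup H] [InnerProductSpace ℂ H]
    (X Z : Fin 7 → (H →ₗ[ℂ] H))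
    (hherm : ∀ k, (X k).IsSymmetric ∧ (Z k).IsSymmetric)
    (hcomm : ∀ i j, i ≠ j →
      Commute (X i) (X j) ∧ Commute (Z i) (Z j) ∧ Commute (X i) (Z j))
    (hsq : ∀ k, k ∈ ({0, 3, 5} : Set (Fin 7)) → (X k) ^ 2 = 1 ∧ (Z k) ^ 2 = 1)
    (hac : ∀ k, k ∈ ({1, 2, 4, 6} : Set (Fin 7)) → X k * Z k + Z k * X k = 0)
    (ψ : H)
    (hS1 : (X 3 * X 4 * X 5 * X 6) ψ = ψ)
    (hS2 : (X 1 * X 2 * X 5 * X 6) ψ = ψ)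
    (hS3 : (X 0 * X 2 * X 4 * X 6) ψ = ψ)
    (hS4 : (X 0 * X 1 * X 4 * X 5) ψ = ψ)
    (hS5 : (Z 3 * Z 4 * Z 5 * Z 6) ψ = ψ)
    (hS6 : (Z 1 * Z 2 * Z 5 * Z 6) ψ = ψ)
    (hS7 : (Z 0 * Z 2 * Z 4 * Z 6) ψ = ψ)
    (hS8 : (Z 0 * Z 1 * Z 4 * Z 5) ψ = ψ) :
    ∀ k, ((X k) ^ 2) ψ = ψ ∧ ((Z k) ^ 2) ψ = ψ ∧ (X k * Z k + Z k * X k) ψ = 0 := by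
  have hXX : ∀ a b, a ≠ b → Commute (X a) (X b) := fun a b h => (hcomm a b h).1
  have hZZ : ∀ a b, a ≠ b → Commute (Z a) (Z b) := fun a b h => (hcomm a b h).2.1
  obtain ⟨hX0, hZ0⟩ := hsq 0 (by simp)
  obtain ⟨hX3, hZ3⟩ := hsq 3 (by simp)
  obtain ⟨hX5, hZ5⟩ := hsq 5 (by simp)
  have hsqX := steane_sq_apply_eq_self X (fun k => (hherm k).1) hXX hX0 hX3 hX5 hS1 hS2 hS3 hS4
  have hsqZ := steane_sq_apply_eq_self Z (fun k => (hherm k).2) hZZ hZ0 hZ3 hZ5 hS5 hS6 hS7 hS8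
  obtain ⟨hSX3, hSX5⟩ := steane_derived_stabilizers X hXX hX5 (hsqX 6) hS1 hS2
  obtain ⟨hSZ3, hSZ5⟩ := steane_derived_stabilizers Z hZZ hZ5 (hsqZ 6) hS5 hS6
  have hanti (t : Fin 7) (l : List (Fin 7)) (hl : (t :: l).Nodup) (hodd : Odd l.length)
      (hmem : ∀ a ∈ l, a ∈ ({1, 2, 4, 6} : Set (Fin 7)))
      (hX : ((t :: l).map X).prod ψ = ψ) (hZ : ((t :: l).map Z).prod ψ = ψ) :
      (X t * Z t + Z t * X t) ψ = 0 :=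
    anticommutator_apply_eq_zero X Z hcomm hl hodd (fun a ha => hac a (hmem a ha))
      (fun a _ => ⟨hsqX a, hsqZ a⟩) hX hZ
  intro k
  refine ⟨hsqX k, hsqZ k, ?_⟩
  fin_cases k
  · exact hanti 0 [2, 4, 6] (by decide) (by decide) (by simp)
      (by simpa [mul_assoc] using hS3) (by simpa [mul_assoc] using hS7)
  · simp [hac 1 (by simp)]
  · simp [hac 2 (by simp)]
  · exact hanti 3 [1, 2, 4] (by decide) (by decide) (by simp) hSX3 hSZ3
  · simp [hac 4 (by simp)]
  · exact hanti 5 [1, 2, 6] (by decide) (by decide) (by simp) hSX5 hSZ5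
  · simp [hac 6 (by simp)]

/-- Algebraic core of self-testing the Steane `[[7,1,3]]` code: the eight (substituted)
stabilizer-type conditions, with squaring relations at sites 1, 4, 6 and anticommutation at
sites 2, 3, 5, 7, imply `Xₖ²ψ = Zₖ²ψ = ψ` and `{Xₖ,Zₖ}ψ = 0` for all `k = 1,…,7`. -/
theorem stmt_10 {H : Type*} [NormedAddCommGroup H] [InnerProductSpace ℂ H]
    [FiniteDimensional ℂ H]
    (X Z : Fin 7 → (H →ₗ[ℂ] H))
    (hherm : ∀ k, (X k).IsSymmetric ∧ (Z k).IsSymmetric)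
    (hcomm : ∀ i j, i ≠ j →
      Commute (X i) (X j) ∧ Commute (Z i) (Z j) ∧ Commute (X i) (Z j))
    (hsq : ∀ k, k ∈ ({0, 3, 5} : Set (Fin 7)) → (X k) ^ 2 = 1 ∧ (Z k) ^ 2 = 1)
    (hac : ∀ k, k ∈ ({1, 2, 4, 6} : Set (Fin 7)) → X k * Z k + Z k * X k = 0)
    (ψ : H)
    (hS1 : (X 3 * X 4 * X 5 * X 6) ψ = ψ)
    (hS2 : (X 1 * X 2 * X 5 * X 6) ψ = ψ)
    (hS3 : (X 0 * X 2 * X 4 * X 6) ψ = ψ)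
    (hS4 : (X 0 * X 1 * X 4 * X 5) ψ = ψ)
    (hS5 : (Z 3 * Z 4 * Z 5 * Z 6) ψ = ψ)
    (hS6 : (Z 1 * Z 2 * Z 5 * Z 6) ψ = ψ)
    (hS7 : (Z 0 * Z 2 * Z 4 * Z 6) ψ = ψ)
    (hS8 : (Z 0 * Z 1 * Z 4 * Z 5) ψ = ψ) :
    ∀ k, ((X k) ^ 2) ψ = ψ ∧ ((Z k) ^ 2) ψ = ψ ∧ (X k * Z k + Z k * X k) ψ = 0 :=
  stmt_10_general X Z hherm hcomm hsq hac ψ hS1 hS2 hS3 hS4 hS5 hS6 hS7 hS8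
end
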